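/- Let S be a Boolean left restriction monoid, let s ∈ S and let e be any projection. Then s·ē = (the complement of (se)⁺)·s, i.e. s ē = \overline{(se)⁺} s. -/

import Mathlib

/-- A left restriction monoid: a monoid with a unary operation `plus` (written `s⁺` in the
paper) satisfying (LR1)–(LR6). -/
class LeftRestrictionMonoid (S : Type*) extends Monoid S where
  plus : S → S
  lr1 : ∀ s : S, plus (plus s) = plus s
  lr2 : ∀ s t : S, plus (plus s * plus t) = plus s * plus t
  lr3 : ∀ s t : S, plus s * plus t = plus t * plus s
  lr4 : ∀ s : S, plus s * s = s
  lr5 : ∀ s t : S, plus (s * t) = plus (s * plus t)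
  lr6 : ∀ s t : S, s * plus t = plus (s * t) * s

namespace LeftRestrictionMonoid

variable {S : Type*} [LeftRestrictionMonoid S]

/-- The set of projections: elements with `a⁺ = a`. -/
def Proj (S : Type*) [LeftRestrictionMonoid S] : Set S := {a | plus a = a}

/-- The set of total elements: elements with `a⁺ = 1`. -/
def Tot (S : Type*) [LeftRestrictionMonoid S] : Set S := {a | plus a = 1}

/-- The natural partial order: `s ≤ t` iff `s = s⁺ t`. -/
def nle (s t : S) : Prop := s = plus s * t

end LeftRestrictionMonoid

open LeftRestrictionMonoid

/-- A Boolean left restriction monoid: a left restriction monoid with a zero element which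
is a projection, such that (B1) the projections form a Boolean algebra under the natural
partial order (with bottom 0, top 1, meet = multiplication, join `join` and complement
`compl`), (B2) right-compatible pairs (`a⁺ b = b⁺ a`) have joins in the natural partial
order (given by `join`), and (B3) multiplication distributes over such binary joins on both
sides. -/
class BooleanLeftRestrictionMonoid (S : Type*) extends LeftRestrictionMonoid S where
  zero : S
  zero_proj : plus zero = zero
  zero_mul' : ∀ s : S, zero * s = zero
  mul_zero' : ∀ s : S, s * zero = zero
  zero_ne_one : zero ≠ 1
  join : S → S → S
  compl : S → S
  -- (B2): `join a b` is the least upper bound of right-compatible a, b in the natural order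
  join_ub_left : ∀ a b : S, plus a * b = plus b * a → LeftRestrictionMonoid.nle a (join a b)
  join_ub_right : ∀ a b : S, plus a * b = plus b * a → LeftRestrictionMonoid.nle b (join a b)
  join_least : ∀ a b c : S, plus a * b = plus b * a →
    LeftRestrictionMonoid.nle a c → LeftRestrictionMonoid.nle b c →
    LeftRestrictionMonoid.nle (join a b) c
  -- (B1): the projections form a Boolean algebra
  join_proj : ∀ e f : S, plus e = e → plus f = f → plus (join e f) = join e f
  compl_proj : ∀ e : S, plus e = e → plus (compl e) = compl e
  compl_inf : ∀ e : S, plus e = e → e * compl e = zero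
  compl_sup : ∀ e : S, plus e = e → join e (compl e) = 1
  -- (B3): multiplication distributes over binary joins from both sides
  ldistrib : ∀ a b c : S, plus a * b = plus b * a → c * join a b = join (c * a) (c * b)
  rdistrib : ∀ a b c : S, plus a * b = plus b * a → join a b * c = join (a * c) (b * c)

open BooleanLeftRestrictionMonoid

/-!
Split `s` along the partition `1 = e ∨ ē`: with `f = (s e)⁺` we have `s e = f s`, so `f̄ s e = f̄ f s = 0`,
while `f (s ē) = s e ē = 0` forces `f̄ (s ē) = s ē`. Hence `f̄ s = f̄ s e ∨ f̄ s ē = 0 ∨ s ē = s ē`.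
-/

namespace LeftRestrictionMonoid

variable {S : Type*} [LeftRestrictionMonoid S]

theorem nle_antisymm {a b : S} (hab : nle a b) (hba : nle b a) : a = b := by
  calc a = plus a * (plus b * a) := by rw [← hba]; exact hab
    _ = plus b * (plus a * a) := by rw [← mul_assoc, lr3, mul_assoc]
    _ = b := by rw [lr4, ← hba]

theorem proj_mul_comm {e f : S} (he : e ∈ Proj S) (hf : f ∈ Proj S) : e * f = f * e := by
  have h := lr3 e f
  rwa [show plus e = e from he, show plus f = f from hf] at h

theorem mul_proj {e : S} (s : S) (he : e ∈ Proj S) : s * e = plus (s * e) * s := by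
  have h := lr6 s e
  rwa [show plus e = e from he] at h

theorem plus_mem_proj (s : S) : plus s ∈ Proj S := lr1 s

end LeftRestrictionMonoid

namespace BooleanLeftRestrictionMonoid

variable {S : Type*} [BooleanLeftRestrictionMonoid S]

theorem compl_mem_proj {e : S} (he : e ∈ Proj S) : compl e ∈ Proj S := compl_proj e he

theorem compl_mul_self {e : S} (he : e ∈ Proj S) : compl e * e = zero := by
  rw [← proj_mul_comm he (compl_mem_proj he)]
  exact compl_inf e he

theorem proj_compatible_compl {e : S} (he : e ∈ Proj S) :
    plus e * compl e = plus (compl e) * e := by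
  rw [show plus e = e from he, show plus (compl e) = compl e from compl_mem_proj he]
  exact proj_mul_comm he (compl_mem_proj he)

theorem zero_join (x : S) : join zero x = x := by
  have hc : plus (zero : S) * x = plus x * zero := by rw [zero_proj, zero_mul', mul_zero']
  refine nle_antisymm (join_least _ _ _ hc ?_ (lr4 x).symm) (join_ub_right _ _ hc)
  show (zero : S) = plus zero * x
  rw [zero_proj, zero_mul']

theorem mul_join_compl (x : S) {e : S} (he : e ∈ Proj S) :
    join (x * e) (x * compl e) = x := by
  rw [← ldistrib e (compl e) x (proj_compatible_compl he), compl_sup e he, mul_one]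

theorem join_compl_mul {e : S} (he : e ∈ Proj S) (x : S) :
    join (e * x) (compl e * x) = x := by
  rw [← rdistrib e (compl e) x (proj_compatible_compl he), compl_sup e he, one_mul]

theorem compl_mul_of_mul_eq_zero {e x : S} (he : e ∈ Proj S) (hx : e * x = zero) :
    compl e * x = x := by
  rw [← zero_join (compl e * x), ← hx, join_compl_mul he]

end BooleanLeftRestrictionMonoid

/-- in a Boolean left restriction monoid, for any element `s` and any
projection `e`, we have `s ē = \overline{(s e)⁺} s`. -/
theorem statement14 {S : Type*} [BooleanLeftRestrictionMonoid S] (s e : S)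
    (he : e ∈ Proj S) :
    s * compl e = compl (plus (s * e)) * s := by
  set f := plus (s * e)
  have hf : f ∈ Proj S := plus_mem_proj (s * e)
  have hse : s * e = f * s := mul_proj s he
  have h_left : compl f * s * e = zero := by
    rw [mul_assoc, hse, ← mul_assoc, compl_mul_self hf, zero_mul']
  have h_right : compl f * (s * compl e) = s * compl e := by
    refine compl_mul_of_mul_eq_zero hf ?_
    rw [← mul_assoc, ← hse, mul_assoc, compl_inf e he, mul_zero']
  calc s * compl e = join (compl f * s * e) (compl f * s * compl e) := by
        rw [h_left, zero_join, mul_assoc, h_right]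
    _ = compl f * s := mul_join_compl _ he
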